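/- Let {W, W̃, Z} be an LTONP data set with Pick operator Λ = WW* − W̃W̃* strictly positive, and set B̃ = W̃ E_𝒰 and R∘ = (I_𝒰 + B̃*Λ⁻¹B̃)^{-1/2}. Then for every λ in the open unit disc: the operators I − λZ* and I − λ Z*(Λ + B̃B̃*)⁻¹Λ are invertible, the operator Υ₂₂(λ) = R∘ + B̃*(I − λZ*)⁻¹ Λ⁻¹ B̃ R∘ on 𝒰 is invertible, and Υ₂₂(λ)⁻¹ = R∘ − λ R∘ B̃* (I − λ Z*(Λ + B̃B̃*)⁻¹Λ)⁻¹ Z* Λ⁻¹ B̃ R∘². In particular the spectrum of Z*(Λ + B̃B̃*)⁻¹Λ is contained in the closed unit disc. -/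

import Mathlib

/- Statement 10 (Invertibility of Υ₂₂ and its inverse formula): Let {W, W̃, Z} be an
LTONP data set with strictly positive Pick operator Λ, B̃ = W̃ E_𝒰 and
R∘ = (I + B̃*Λ⁻¹B̃)^{-1/2}.  Then for every λ in the open unit disc the operators
I − λZ* and I − λZ*(Λ + B̃B̃*)⁻¹Λ are invertible, the operator
Υ₂₂(λ) = R∘ + B̃*(I − λZ*)⁻¹Λ⁻¹B̃R∘ is invertible, and
Υ₂₂(λ)⁻¹ = R∘ − λR∘B̃*(I − λZ*(Λ + B̃B̃*)⁻¹Λ)⁻¹Z*Λ⁻¹B̃R∘².  In particular the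
spectrum of Z*(Λ + B̃B̃*)⁻¹Λ is contained in the closed unit disc. -/

open ContinuousLinearMap Filter Topology
open scoped ENNReal

noncomputable section

local notation "ℓ²(" X ")" => lp (fun _ : ℕ => X) 2

/-- A bounded operator on a Hilbert space is strictly positive if it is positive
(self-adjoint with non-negative quadratic form) and invertible. -/
def IsStrictlyPositiveOp {H : Type*} [NormedAddCommGroup H] [InnerProductSpace ℂ H]
    [CompleteSpace H] (T : H →L[ℂ] H) : Prop :=
  T.IsPositive ∧ IsUnit T

variable {𝒵 𝒴 𝒰 : Type*}
  [NormedAddCommGroup 𝒵] [InnerProductSpace ℂ 𝒵] [CompleteSpace 𝒵]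
  [NormedAddCommGroup 𝒴] [InnerProductSpace ℂ 𝒴] [CompleteSpace 𝒴]
  [NormedAddCommGroup 𝒰] [InnerProductSpace ℂ 𝒰] [CompleteSpace 𝒰]

/-!
Write `M = Λ + B̃B̃*` and `T = Z*M⁻¹Λ`. The intertwinings `ZW = WS_𝒴`, `ZW̃ = W̃S_𝒰`, together
with `S_𝒴S_𝒴* ≤ 1` and `S_𝒰S_𝒰* + E_𝒰E_𝒰* = 1`, give `Z(WW*)Z* ≤ WW*` and `ZΛZ* ≤ M`, hence
`T*ΛT ≤ ΛM⁻¹Λ ≤ Λ`. So `Z*` and `T` are contractions for the quadratic forms of `WW*` and `Λ`,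
both of which dominate the form of `Λ`; as `Λ` is strictly positive, that form is equivalent to
the squared norm. Hence the powers of `Z*` and `T` are bounded, their spectral radii are at most
one, and `I − λZ*`, `I − λT` are invertible.

The rest is algebra. With `X = I + B̃*Λ⁻¹B̃ = R∘⁻²`, we have `Υ₂₂(λ) = Y(λ)R∘`, where
`Y(λ) = X + λB̃*(I − λZ*)⁻¹Z*Λ⁻¹B̃` is the transfer function of the system
`(Z*, Z*Λ⁻¹B̃, B̃*, X)`. The inverse of the transfer function of `(A, B, C, D)` is the transfer
function of `(A − BD⁻¹C, BD⁻¹, −D⁻¹C, D⁻¹)`, and by the Woodbury identity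
`M⁻¹Λ = I − Λ⁻¹B̃X⁻¹B̃*` the state operator `A − BD⁻¹C` of the inverse system is exactly `T`.
-/

open scoped Ring

section SpectralRadius

variable {A : Type*} [NormedRing A] [NormedAlgebra ℂ A]

lemma spectralRadius_le_one_of_norm_pow_le [CompleteSpace A] {a : A} {C : ℝ}
    (h : ∀ n : ℕ, ‖a ^ n‖ ≤ C) : spectralRadius ℂ a ≤ 1 := by
  refine le_of_forall_gt_imp_ge_of_dense fun y hy ↦
    (spectrum.spectralRadius_le_liminf_pow_nnnorm_pow_one_div ℂ a).trans ?_
  refine liminf_le_of_frequently_le' (Eventually.frequently ?_)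
  filter_upwards [ENNReal.eventually_pow_one_div_le (ENNReal.coe_ne_top (r := C.toNNReal)) hy]
    with n hn
  refine le_trans (ENNReal.rpow_le_rpow ?_ (by positivity)) hn
  exact_mod_cast norm_toNNReal (a := a ^ n) ▸ Real.toNNReal_le_toNNReal (h n)

lemma isUnit_one_sub_smul_of_spectralRadius_le_one {a : A} (ha : spectralRadius ℂ a ≤ 1)
    {z : ℂ} (hz : ‖z‖ < 1) : IsUnit (1 - z • a) :=
  spectrum.isUnit_one_sub_smul_of_lt_inv_radius <|
    calc (‖z‖₊ : ℝ≥0∞) < 1 := by exact_mod_cast hz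
      _ ≤ (spectralRadius ℂ a)⁻¹ := ENNReal.one_le_inv.2 ha

end SpectralRadius

section CStarAlgebra

variable {A : Type*} [CStarAlgebra A] [PartialOrder A] [StarOrderedRing A]

lemma mul_star_le_one_of_star_mul_self_eq_one {v : A} (hv : star v * v = 1) :
    v * star v ≤ 1 := by
  refine IsStarProjection.le_one ⟨?_, ?_⟩
  · rw [IsIdempotentElem, mul_assoc, ← mul_assoc (star v), hv, one_mul]
  · simp [IsSelfAdjoint, star_mul]

lemma star_pow_mul_mul_pow_le {a b : A} (h : star a * b * a ≤ b) (n : ℕ) :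
    star (a ^ n) * b * a ^ n ≤ b := by
  induction n with
  | zero => simp
  | succ n ih =>
    calc star (a ^ (n + 1)) * b * a ^ (n + 1) = star a * (star (a ^ n) * b * a ^ n) * a := by
          simp only [pow_succ, star_mul, mul_assoc]
      _ ≤ star a * b * a := star_left_conjugate_le_conjugate ih a
      _ ≤ b := h

lemma IsStrictlyPositive.exists_pos_algebraMap_le [Nontrivial A] {a : A}
    (ha : IsStrictlyPositive a) : ∃ r > 0, algebraMap ℝ A r ≤ a :=
  (CFC.exists_pos_algebraMap_le_iff ha.isSelfAdjoint).2 fun _ hx ↦ ha.spectrum_pos hx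

lemma exists_norm_le_of_star_mul_mul_le {a : A} (ha : IsStrictlyPositive a) (c : A) :
    ∃ C, ∀ b, star b * a * b ≤ c → ‖b‖ ≤ C := by
  rcases subsingleton_or_nontrivial A with hA | hA
  · exact ⟨0, fun b _ ↦ by simp [Subsingleton.elim b 0]⟩
  obtain ⟨r, hr, hra⟩ := ha.exists_pos_algebraMap_le
  refine ⟨√(r⁻¹ * ‖c‖), fun b hb ↦ Real.le_sqrt_of_sq_le ?_⟩
  have hbb : star b * b ≤ r⁻¹ • c := by
    calc star b * b = r⁻¹ • (star b * algebraMap ℝ A r * b) := by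
          rw [Algebra.algebraMap_eq_smul_one, mul_smul_comm, mul_one, smul_mul_assoc,
            smul_smul, inv_mul_cancel₀ hr.ne', one_smul]
      _ ≤ r⁻¹ • c := smul_le_smul_of_nonneg_left
          ((star_left_conjugate_le_conjugate hra b).trans hb) (inv_nonneg.2 hr.le)
  calc ‖b‖ ^ 2 = ‖star b * b‖ := by rw [CStarRing.norm_star_mul_self, sq]
    _ ≤ ‖r⁻¹ • c‖ := CStarAlgebra.norm_le_norm_of_nonneg_of_le (star_mul_self_nonneg b) hbb
    _ = r⁻¹ * ‖c‖ := by rw [norm_smul, Real.norm_of_nonneg (inv_nonneg.2 hr.le)]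

lemma spectralRadius_le_one_of_star_mul_mul_le {Λ Γ a : A} (hΛ : IsStrictlyPositive Λ)
    (hΛΓ : Λ ≤ Γ) (ha : star a * Γ * a ≤ Γ) : spectralRadius ℂ a ≤ 1 := by
  obtain ⟨C, hC⟩ := exists_norm_le_of_star_mul_mul_le hΛ Γ
  refine spectralRadius_le_one_of_norm_pow_le (C := C) fun n ↦ hC _ ?_
  exact (star_left_conjugate_le_conjugate hΛΓ _).trans (star_pow_mul_mul_pow_le ha n)

lemma star_mul_mul_le_of_mul_mul_star_le {Λ M a : A} (hΛ : IsStrictlyPositive Λ) (hΛM : Λ ≤ M)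
    (ha : a * Λ * star a ≤ M) :
    star (star a * M⁻¹ʳ * Λ) * Λ * (star a * M⁻¹ʳ * Λ) ≤ Λ := by
  have hM : IsStrictlyPositive M := hΛ.of_le hΛM
  have hMi : star M⁻¹ʳ = M⁻¹ʳ := hM.ringInverse.isSelfAdjoint
  calc star (star a * M⁻¹ʳ * Λ) * Λ * (star a * M⁻¹ʳ * Λ)
      = star (M⁻¹ʳ * Λ) * (a * Λ * star a) * (M⁻¹ʳ * Λ) := by
        simp only [star_mul, star_star, mul_assoc]
    _ ≤ star (M⁻¹ʳ * Λ) * M * (M⁻¹ʳ * Λ) := star_left_conjugate_le_conjugate ha _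
    _ = star Λ * M⁻¹ʳ * Λ := by
        rw [star_mul, hMi, mul_assoc, ← mul_assoc M, Ring.mul_inverse_cancel _ hM.isUnit,
          one_mul, mul_assoc]
    _ ≤ star Λ * Λ⁻¹ʳ * Λ :=
        star_left_conjugate_le_conjugate (CStarAlgebra.ringInverse_le_ringInverse hΛM hΛ) _
    _ = Λ := by rw [hΛ.isSelfAdjoint.star_eq, Ring.mul_inverse_cancel _ hΛ.isUnit, one_mul]

end CStarAlgebra

section LoewnerOrder

variable {E F G U : Type*}
  [NormedAddCommGroup E] [InnerProductSpace ℂ E] [CompleteSpace E]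
  [NormedAddCommGroup F] [InnerProductSpace ℂ F] [CompleteSpace F]
  [NormedAddCommGroup G] [InnerProductSpace ℂ G] [CompleteSpace G]
  [NormedAddCommGroup U] [InnerProductSpace ℂ U] [CompleteSpace U]

lemma comp_comp_adjoint_mono {P Q : E →L[ℂ] E} (h : P ≤ Q) (W : E →L[ℂ] F) :
    W ∘L P ∘L adjoint W ≤ W ∘L Q ∘L adjoint W := by
  rw [ContinuousLinearMap.le_def] at h ⊢
  simpa only [comp_sub, sub_comp] using h.conj_adjoint W

lemma comp_comp_adjoint_eq_of_comp_eq {Z : F →L[ℂ] F} {W : E →L[ℂ] F} {S : E →L[ℂ] E}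
    (hW : Z ∘L W = W ∘L S) :
    Z ∘L (W ∘L adjoint W) ∘L adjoint Z = W ∘L (S ∘L adjoint S) ∘L adjoint W := by
  calc Z ∘L (W ∘L adjoint W) ∘L adjoint Z = (Z ∘L W) ∘L adjoint (Z ∘L W) := by
        simp only [adjoint_comp, comp_assoc]
    _ = _ := by simp only [hW, adjoint_comp, comp_assoc]

lemma comp_comp_adjoint_le_of_comp_eq {Z : F →L[ℂ] F} {W : E →L[ℂ] F} {S : E →L[ℂ] E}
    (hW : Z ∘L W = W ∘L S) (hS : S ∘L adjoint S ≤ 1) :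
    Z ∘L (W ∘L adjoint W) ∘L adjoint Z ≤ W ∘L adjoint W := by
  rw [comp_comp_adjoint_eq_of_comp_eq hW]
  exact comp_comp_adjoint_mono hS W

lemma comp_pick_comp_adjoint_le {Z : F →L[ℂ] F} {W : E →L[ℂ] F} {Wt : G →L[ℂ] F}
    {S : E →L[ℂ] E} {St : G →L[ℂ] G} {Et : U →L[ℂ] G} (hW : Z ∘L W = W ∘L S)
    (hWt : Z ∘L Wt = Wt ∘L St) (hS : S ∘L adjoint S ≤ 1)
    (hSt : St ∘L adjoint St + Et ∘L adjoint Et = 1) :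
    Z ∘L (W ∘L adjoint W - Wt ∘L adjoint Wt) ∘L adjoint Z ≤
      W ∘L adjoint W - Wt ∘L adjoint Wt + (Wt ∘L Et) ∘L adjoint (Wt ∘L Et) := by
  have hWt' : Z ∘L (Wt ∘L adjoint Wt) ∘L adjoint Z =
      Wt ∘L adjoint Wt - (Wt ∘L Et) ∘L adjoint (Wt ∘L Et) := by
    rw [comp_comp_adjoint_eq_of_comp_eq hWt, eq_sub_of_add_eq hSt]
    simp only [comp_sub, sub_comp, adjoint_comp, comp_assoc]
    rfl
  calc Z ∘L (W ∘L adjoint W - Wt ∘L adjoint Wt) ∘L adjoint Z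
      = Z ∘L (W ∘L adjoint W) ∘L adjoint Z - Wt ∘L adjoint Wt +
          (Wt ∘L Et) ∘L adjoint (Wt ∘L Et) := by
        rw [sub_add, ← hWt']; simp only [comp_sub, sub_comp]
    _ ≤ _ := by gcongr; exact comp_comp_adjoint_le_of_comp_eq hW hS

end LoewnerOrder

section ShiftOperator

variable {H : Type*} [NormedAddCommGroup H] [InnerProductSpace ℂ H]
  {S : ℓ²(H) →L[ℂ] ℓ²(H)} (hS0 : ∀ x : ℓ²(H), S x 0 = 0)
  (hS1 : ∀ (x : ℓ²(H)) (n : ℕ), S x (n + 1) = x n)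
include hS0 hS1

lemma shift_single (n : ℕ) (u : H) : S (lp.single 2 n u) = lp.single 2 (n + 1) u := by
  ext (_ | m)
  · simp [hS0]
  · rw [hS1]
    rcases eq_or_ne m n with rfl | hmn
    · simp
    · rw [lp.single_apply_ne _ _ _ hmn, lp.single_apply_ne _ _ _ (by omega)]

variable [CompleteSpace H]

lemma adjoint_shift_apply (v : ℓ²(H)) (n : ℕ) : adjoint S v n = v (n + 1) :=
  ext_inner_right ℂ fun u ↦ by
    rw [← lp.inner_single_right, adjoint_inner_left, shift_single hS0 hS1, lp.inner_single_right]

lemma adjoint_shift_comp_shift : adjoint S ∘L S = 1 := by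
  ext x n
  simp [adjoint_shift_apply hS0 hS1, hS1]

lemma shift_comp_adjoint_le_one : S ∘L adjoint S ≤ 1 := by
  have hSS : star S * S = 1 := by
    rw [star_eq_adjoint, mul_def]; exact adjoint_shift_comp_shift hS0 hS1
  simpa only [mul_def, star_eq_adjoint] using mul_star_le_one_of_star_mul_self_eq_one hSS

lemma shift_comp_adjoint_add_embed_comp_adjoint {E : H →L[ℂ] ℓ²(H)}
    (hE0 : ∀ u : H, E u 0 = u) (hE1 : ∀ (u : H) (n : ℕ), E u (n + 1) = 0) :
    S ∘L adjoint S + E ∘L adjoint E = 1 := by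
  have hE : ∀ w : ℓ²(H), adjoint E w = w 0 := fun w ↦ ext_inner_right ℂ fun u ↦ by
    rw [adjoint_inner_left, lp.inner_eq_tsum, tsum_eq_single 0 (by rintro (_ | n) h <;> simp_all)]
    rw [hE0]
  ext v (_ | n)
  · simp [hS0, hE, hE0]
  · simp [hS1, hE, hE1, adjoint_shift_apply hS0 hS1]

end ShiftOperator

section TransferFunction

variable {𝕜 E U : Type*} [NontriviallyNormedField 𝕜] [NormedAddCommGroup E] [NormedSpace 𝕜 E]
  [NormedAddCommGroup U] [NormedSpace 𝕜 U]

def transferFunction (A : E →L[𝕜] E) (B : U →L[𝕜] E) (C : E →L[𝕜] U) (D : U →L[𝕜] U)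
    (z : 𝕜) : U →L[𝕜] U :=
  D + z • C ∘L (1 - z • A)⁻¹ʳ ∘L B

lemma transferFunction_mul_transferFunction_inverse (A : E →L[𝕜] E) (B : U →L[𝕜] E)
    (C : E →L[𝕜] U) {D : U →L[𝕜] U} (hD : IsUnit D) {z : 𝕜} (hΔ : IsUnit (1 - z • A))
    (hΓ : IsUnit (1 - z • (A - B ∘L D⁻¹ʳ ∘L C))) :
    transferFunction A B C D z *
        transferFunction (A - B ∘L D⁻¹ʳ ∘L C) (B ∘L D⁻¹ʳ) (-(D⁻¹ʳ ∘L C)) D⁻¹ʳ z = 1 ∧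
      transferFunction (A - B ∘L D⁻¹ʳ ∘L C) (B ∘L D⁻¹ʳ) (-(D⁻¹ʳ ∘L C)) D⁻¹ʳ z *
        transferFunction A B C D z = 1 := by
  unfold transferFunction
  set Di := D⁻¹ʳ
  have hΓΔ : (1 - z • (A - B ∘L Di ∘L C)) - (1 - z • A) = z • B ∘L Di ∘L C := by
    rw [smul_sub]; abel
  set Δi := (1 - z • A)⁻¹ʳ
  set Γi := (1 - z • (A - B ∘L Di ∘L C))⁻¹ʳ
  have hD_Di : D ∘L Di = 1 := Ring.mul_inverse_cancel _ hD
  have hDi_D : Di ∘L D = 1 := Ring.inverse_mul_cancel _ hD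
  have hD_Di_comp : ∀ X : U →L[𝕜] U, D ∘L Di ∘L X = X := fun X ↦ by
    rw [← comp_assoc, hD_Di]; rfl
  have hB_one : B ∘L (1 : U →L[𝕜] U) = B := comp_id B
  have hres₁ : Δi - Γi = z • Δi ∘L B ∘L Di ∘L C ∘L Γi := by
    rw [Ring.inverse_sub_inverse (iff_of_true hΔ hΓ), hΓΔ]
    simp only [mul_def, smul_comp, comp_smul, comp_assoc]
    rfl
  have hres₂ : Δi - Γi = z • Γi ∘L B ∘L Di ∘L C ∘L Δi := by
    rw [← neg_sub Γi Δi, Ring.inverse_sub_inverse (iff_of_true hΓ hΔ), ← neg_sub _ (1 - z • A),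
      hΓΔ]
    simp only [mul_def, smul_comp, comp_smul, comp_assoc, neg_comp, comp_neg, neg_neg]
    rfl
  constructor
  · calc _ = 1 + z • C ∘L (Δi - Γi - z • Δi ∘L B ∘L Di ∘L C ∘L Γi) ∘L B ∘L Di := by
          simp only [mul_def, add_comp, comp_add, comp_sub, smul_comp, comp_smul, sub_comp,
            neg_comp, comp_neg, comp_assoc, hD_Di_comp, hD_Di]
          module
      _ = 1 := by rw [← hres₁, sub_self]; simp
  · calc _ = 1 + z • Di ∘L C ∘L (Δi - Γi - z • Γi ∘L B ∘L Di ∘L C ∘L Δi) ∘L B := by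
          simp only [mul_def, add_comp, comp_add, comp_sub, smul_comp, comp_smul, sub_comp,
            neg_comp, comp_assoc, hDi_D, hB_one]
          module
      _ = 1 := by rw [← hres₂, sub_self]; simp

lemma ringInverse_add_comp_comp_self {Λ : E →L[𝕜] E} (B : U →L[𝕜] E) (C : E →L[𝕜] U)
    (hΛ : IsUnit Λ) (hM : IsUnit (Λ + B ∘L C)) (hX : IsUnit (1 + C ∘L Λ⁻¹ʳ ∘L B)) :
    (Λ + B ∘L C)⁻¹ʳ ∘L Λ = 1 - Λ⁻¹ʳ ∘L B ∘L (1 + C ∘L Λ⁻¹ʳ ∘L B)⁻¹ʳ ∘L C := by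
  rw [← mul_def, Ring.inverse_mul_eq_iff_eq_mul _ _ _ hM, mul_sub, mul_one]
  set Xi := (1 + C ∘L Λ⁻¹ʳ ∘L B)⁻¹ʳ
  have hX_Xi : Xi + C ∘L Λ⁻¹ʳ ∘L B ∘L Xi = 1 := by
    have := Ring.mul_inverse_cancel _ hX
    rwa [mul_def, add_comp, comp_assoc, comp_assoc] at this
  have hΛ_Λi : ∀ Y : E →L[𝕜] E, Λ ∘L Λ⁻¹ʳ ∘L Y = Y := fun Y ↦ by
    rw [← comp_assoc, show Λ ∘L Λ⁻¹ʳ = 1 from Ring.mul_inverse_cancel _ hΛ]; rfl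
  have hB_one : B ∘L (1 : U →L[𝕜] U) ∘L C = B ∘L C := rfl
  calc Λ = Λ + B ∘L C - B ∘L (Xi + C ∘L Λ⁻¹ʳ ∘L B ∘L Xi) ∘L C := by
        rw [hX_Xi, hB_one, add_sub_cancel_right]
    _ = _ := by simp only [mul_def, add_comp, comp_add, comp_assoc, hΛ_Λi]

lemma add_comp_resolvent_eq_transferFunction_mul {Λ A : E →L[𝕜] E} (B : U →L[𝕜] E)
    (C : E →L[𝕜] U) (R : U →L[𝕜] U) {z : 𝕜} (hΔ : IsUnit (1 - z • A)) :
    R + C ∘L (1 - z • A)⁻¹ʳ ∘L Λ⁻¹ʳ ∘L B ∘L R =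
      transferFunction A (A ∘L Λ⁻¹ʳ ∘L B) C (1 + C ∘L Λ⁻¹ʳ ∘L B) z * R := by
  have hΔi : (1 - z • A)⁻¹ʳ = 1 + z • (1 - z • A)⁻¹ʳ ∘L A := by
    have := Ring.inverse_mul_cancel _ hΔ
    rwa [mul_sub, mul_one, mul_smul_comm, sub_eq_iff_eq_add] at this
  conv_lhs => rw [hΔi]
  simp only [transferFunction, mul_def, add_comp, comp_add, smul_comp, comp_smul, comp_assoc]
  rw [← add_assoc]
  rfl

lemma isUnit_and_ringInverse_eq_of_mul_eq_one {M : Type*} [MonoidWithZero M] {a b : M}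
    (hab : a * b = 1) (hba : b * a = 1) : IsUnit a ∧ a⁻¹ʳ = b := by
  have ha : IsUnit a := isUnit_iff_exists.2 ⟨b, hab, hba⟩
  refine ⟨ha, ?_⟩
  rw [← mul_one a⁻¹ʳ, ← hab, Ring.inverse_mul_cancel_left _ _ ha]

theorem isUnit_and_ringInverse_add_comp_resolvent (Λ A : E →L[𝕜] E) (B : U →L[𝕜] E)
    (C : E →L[𝕜] U) (R : U →L[𝕜] U) (z : 𝕜) (hΛ : IsUnit Λ) (hM : IsUnit (Λ + B ∘L C))
    (hX : IsUnit (1 + C ∘L Λ⁻¹ʳ ∘L B)) (hR : R ∘L R = (1 + C ∘L Λ⁻¹ʳ ∘L B)⁻¹ʳ)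
    (hΔ : IsUnit (1 - z • A)) (hΓ : IsUnit (1 - z • A ∘L (Λ + B ∘L C)⁻¹ʳ ∘L Λ)) :
    IsUnit (R + C ∘L (1 - z • A)⁻¹ʳ ∘L Λ⁻¹ʳ ∘L B ∘L R) ∧
    (R + C ∘L (1 - z • A)⁻¹ʳ ∘L Λ⁻¹ʳ ∘L B ∘L R)⁻¹ʳ =
      R - z • (R ∘L C) ∘L (1 - z • A ∘L (Λ + B ∘L C)⁻¹ʳ ∘L Λ)⁻¹ʳ ∘L A ∘L Λ⁻¹ʳ ∘L B ∘L R ∘L R := by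
  set X := 1 + C ∘L Λ⁻¹ʳ ∘L B
  have hT : A ∘L (Λ + B ∘L C)⁻¹ʳ ∘L Λ = A - (A ∘L Λ⁻¹ʳ ∘L B) ∘L X⁻¹ʳ ∘L C := by
    rw [ringInverse_add_comp_comp_self B C hΛ hM hX, comp_sub]
    rfl
  rw [hT] at hΓ ⊢
  rw [add_comp_resolvent_eq_transferFunction_mul B C R hΔ]
  obtain ⟨hYK, hKY⟩ := transferFunction_mul_transferFunction_inverse A (A ∘L Λ⁻¹ʳ ∘L B) C hX hΔ hΓ
  set Y := transferFunction A (A ∘L Λ⁻¹ʳ ∘L B) C X z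
  set V := R - z • (R ∘L C) ∘L (1 - z • (A - (A ∘L Λ⁻¹ʳ ∘L B) ∘L X⁻¹ʳ ∘L C))⁻¹ʳ ∘L A ∘L
    Λ⁻¹ʳ ∘L B ∘L R ∘L R
  have hRu : IsUnit R := isUnit_mul_self_iff.1 (by rw [mul_def, hR]; exact hX.ringInverse)
  have hK : transferFunction (A - (A ∘L Λ⁻¹ʳ ∘L B) ∘L X⁻¹ʳ ∘L C) ((A ∘L Λ⁻¹ʳ ∘L B) ∘L X⁻¹ʳ)
      (-(X⁻¹ʳ ∘L C)) X⁻¹ʳ z = R * V := by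
    simp only [V, transferFunction, ← hR, mul_def, comp_sub, comp_smul, neg_comp, comp_assoc,
      smul_neg, ← sub_eq_add_neg]
  rw [hK] at hYK hKY
  have hVY : V * Y = R⁻¹ʳ := by
    rw [← Ring.inverse_mul_cancel_left _ (V * Y) hRu, ← mul_assoc R, hKY, mul_one]
  refine isUnit_and_ringInverse_eq_of_mul_eq_one ?_ ?_
  · rw [mul_assoc, hYK]
  · rw [← mul_assoc, hVY, Ring.inverse_mul_cancel _ hRu]

end TransferFunction

lemma IsStrictlyPositiveOp.isStrictlyPositive {H : Type*} [NormedAddCommGroup H]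
    [InnerProductSpace ℂ H] [CompleteSpace H] {T : H →L[ℂ] H} (hT : IsStrictlyPositiveOp T) :
    IsStrictlyPositive T :=
  ⟨(nonneg_iff_isPositive T).2 hT.1, hT.2⟩

theorem upsilon22_invertible_and_inverse_formula
    -- the unilateral forward shifts and the embedding onto the zeroth coordinate
    (S𝒴 : ℓ²(𝒴) →L[ℂ] ℓ²(𝒴)) (S𝒰 : ℓ²(𝒰) →L[ℂ] ℓ²(𝒰))
    (hS𝒴0 : ∀ x : ℓ²(𝒴), S𝒴 x 0 = 0)
    (hS𝒴1 : ∀ (x : ℓ²(𝒴)) (n : ℕ), S𝒴 x (n + 1) = x n)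
    (hS𝒰0 : ∀ x : ℓ²(𝒰), S𝒰 x 0 = 0)
    (hS𝒰1 : ∀ (x : ℓ²(𝒰)) (n : ℕ), S𝒰 x (n + 1) = x n)
    (E𝒰 : 𝒰 →L[ℂ] ℓ²(𝒰))
    (hE𝒰0 : ∀ u : 𝒰, E𝒰 u 0 = u) (hE𝒰1 : ∀ (u : 𝒰) (n : ℕ), E𝒰 u (n + 1) = 0)
    -- the LTONP data set {W, W̃, Z}
    (Z : 𝒵 →L[ℂ] 𝒵) (W : ℓ²(𝒴) →L[ℂ] 𝒵) (Wt : ℓ²(𝒰) →L[ℂ] 𝒵)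
    (hW : Z.comp W = W.comp S𝒴) (hWt : Z.comp Wt = Wt.comp S𝒰)
    -- Λ, B̃
    (Λ : 𝒵 →L[ℂ] 𝒵) (Bt : 𝒰 →L[ℂ] 𝒵)
    (hΛ : Λ = W.comp (adjoint W) - Wt.comp (adjoint Wt))
    (hBt : Bt = Wt.comp E𝒰)
    -- the Pick operator is strictly positive
    (hpos : IsStrictlyPositiveOp Λ)
    -- R∘ = (I + B̃*Λ⁻¹B̃)^{-1/2}
    (R : 𝒰 →L[ℂ] 𝒰)
    (hR : R.IsPositive ∧
      R.comp R = Ring.inverse (1 + (adjoint Bt).comp ((Ring.inverse Λ).comp Bt)))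
    (z : ℂ) (hz : ‖z‖ < 1) :
    IsUnit (1 - z • adjoint Z) ∧
    IsUnit (1 - z • ((adjoint Z).comp
      ((Ring.inverse (Λ + Bt.comp (adjoint Bt))).comp Λ))) ∧
    IsUnit (R + (adjoint Bt).comp ((Ring.inverse (1 - z • adjoint Z)).comp
      ((Ring.inverse Λ).comp (Bt.comp R)))) ∧
    Ring.inverse (R + (adjoint Bt).comp ((Ring.inverse (1 - z • adjoint Z)).comp
        ((Ring.inverse Λ).comp (Bt.comp R))))
      = R - z • ((R.comp (adjoint Bt)).comp
          ((Ring.inverse (1 - z • ((adjoint Z).comp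
              ((Ring.inverse (Λ + Bt.comp (adjoint Bt))).comp Λ)))).comp
            ((adjoint Z).comp ((Ring.inverse Λ).comp (Bt.comp (R.comp R)))))) ∧
    spectralRadius ℂ ((adjoint Z).comp
      ((Ring.inverse (Λ + Bt.comp (adjoint Bt))).comp Λ)) ≤ 1 := by
  have hΛsp : IsStrictlyPositive Λ := hpos.isStrictlyPositive
  have hΛM : Λ ≤ Λ + Bt ∘L adjoint Bt :=
    le_add_of_nonneg_right ((nonneg_iff_isPositive _).2 (isPositive_self_comp_adjoint Bt))
  have hX : IsStrictlyPositive (1 + adjoint Bt ∘L Λ⁻¹ʳ ∘L Bt) :=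
    isStrictlyPositive_one.add_nonneg <| (nonneg_iff_isPositive _).2 <|
      ((nonneg_iff_isPositive _).1 hΛsp.ringInverse.nonneg).adjoint_conj Bt
  have hZ : spectralRadius ℂ (adjoint Z) ≤ 1 := by
    refine spectralRadius_le_one_of_star_mul_mul_le hΛsp (Γ := W ∘L adjoint W) ?_ ?_
    · rw [hΛ]
      exact sub_le_self _ ((nonneg_iff_isPositive _).2 (isPositive_self_comp_adjoint Wt))
    · simpa only [star_eq_adjoint, adjoint_adjoint, mul_def, comp_assoc] using
        comp_comp_adjoint_le_of_comp_eq hW (shift_comp_adjoint_le_one hS𝒴0 hS𝒴1)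
  have hT : spectralRadius ℂ (adjoint Z ∘L (Λ + Bt ∘L adjoint Bt)⁻¹ʳ ∘L Λ) ≤ 1 := by
    have hTeq : adjoint Z ∘L (Λ + Bt ∘L adjoint Bt)⁻¹ʳ ∘L Λ =
        star Z * (Λ + Bt ∘L adjoint Bt)⁻¹ʳ * Λ := by
      rw [star_eq_adjoint, mul_def, mul_def, comp_assoc]
    rw [hTeq]
    refine spectralRadius_le_one_of_star_mul_mul_le hΛsp le_rfl
      (star_mul_mul_le_of_mul_mul_star_le hΛsp hΛM ?_)
    rw [hΛ, hBt]
    simpa only [star_eq_adjoint, mul_def, comp_assoc] using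
      comp_pick_comp_adjoint_le hW hWt (shift_comp_adjoint_le_one hS𝒴0 hS𝒴1)
        (shift_comp_adjoint_add_embed_comp_adjoint hS𝒰0 hS𝒰1 hE𝒰0 hE𝒰1)
  have hΔ := isUnit_one_sub_smul_of_spectralRadius_le_one hZ hz
  have hΓ := isUnit_one_sub_smul_of_spectralRadius_le_one hT hz
  obtain ⟨hΥ, hΥinv⟩ := isUnit_and_ringInverse_add_comp_resolvent Λ (adjoint Z) Bt (adjoint Bt)
    R z hΛsp.isUnit (hΛsp.of_le hΛM).isUnit hX.isUnit hR.2 hΔ hΓ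
  exact ⟨hΔ, hΓ, hΥ, hΥinv, hT⟩

end
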